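/- Let (Ω, F, P) be a probability space, let A, B, C : Ω → ℝ be essentially bounded random variables, and let ε > 0 satisfy C ≥ ε almost surely. Then the covariance of the ratios A/C and B/C satisfies |Cov(A/C, B/C)| ≤ (√Var(A)/ε + ‖A‖_∞·√Var(C)/ε²) · (√Var(B)/ε + ‖B‖_∞·√Var(C)/ε²), where ‖·‖_∞ denotes the essential supremum norm. In particular, if Var(A), Var(B), Var(C) ≤ c/N for some c > 0 and N ≥ 1, then |Cov(A/C, B/C)| ≤ c·(1/ε + max(‖A‖_∞,‖B‖_∞)/ε²)² · (1/N). -/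

import Mathlib

open MeasureTheory ProbabilityTheory

/-- Covariance of two real random variables. -/
noncomputable def cov {Ω : Type*} [MeasurableSpace Ω] (P : Measure Ω)
    (f g : Ω → ℝ) : ℝ :=
  ∫ ω, (f ω - ∫ y, f y ∂P) * (g ω - ∫ y, g y ∂P) ∂P

/-- Essential supremum norm of a real random variable. -/
noncomputable def essNorm {Ω : Type*} [MeasurableSpace Ω] (P : Measure Ω)
    (f : Ω → ℝ) : ℝ :=
  (eLpNorm f ⊤ P).toReal

set_option linter.unusedSectionVars false

section Helpers
open scoped ENNReal NNReal
variable {Ω : Type*} [MeasurableSpace Ω] (P : Measure Ω) [IsProbabilityMeasure P]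


lemma toReal_eLpNorm_two {f : Ω → ℝ} (hf : MemLp f 2 P) :
    (eLpNorm f 2 P).toReal = Real.sqrt (∫ ω, (f ω) ^ 2 ∂P) := by
  rw [hf.eLpNorm_eq_integral_rpow_norm two_ne_zero ENNReal.ofNat_ne_top,
    ENNReal.toReal_ofReal (by positivity)]
  have h2 : ((2 : ℝ≥0∞).toReal) = ((2 : ℕ) : ℝ) := by norm_num
  have hint : ∫ ω, ‖f ω‖ ^ ((2 : ℝ≥0∞).toReal) ∂P = ∫ ω, (f ω) ^ 2 ∂P := by
    refine integral_congr_ae (Filter.Eventually.of_forall fun ω => ?_)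
    simp only [h2, Real.rpow_natCast, Real.norm_eq_abs, sq_abs]
  rw [hint, Real.sqrt_eq_rpow, h2]
  norm_num

lemma variance_eq_integral' {f : Ω → ℝ} (hf : MemLp f 2 P) :
    variance f P = ∫ ω, (f ω - ∫ y, f y ∂P) ^ 2 ∂P := by
  exact variance_eq_integral hf.1.aemeasurable

lemma sqrt_var_ratio_le {A C : Ω → ℝ} (hA : MemLp A ⊤ P) (hC : MemLp C ⊤ P)
    {ε : ℝ} (hε : 0 < ε) (hCε : ∀ᵐ ω ∂P, ε ≤ C ω) :
    Real.sqrt (variance (fun ω => A ω / C ω) P)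
      ≤ Real.sqrt (variance A P) / ε
        + (eLpNorm A ⊤ P).toReal * Real.sqrt (variance C P) / ε ^ 2 := by
  set NA : ℝ := (eLpNorm A ⊤ P).toReal with hNAdef
  have hNA : 0 ≤ NA := ENNReal.toReal_nonneg
  have bdA : ∀ᵐ ω ∂P, |A ω| ≤ NA := by
    filter_upwards [enorm_ae_le_eLpNormEssSup A P] with ω hω
    have h := ENNReal.toReal_mono (by rw [← eLpNorm_exponent_top]; exact hA.2.ne) hω
    simpa [hNAdef, eLpNorm_exponent_top] using h
  have hCpos : ∀ᵐ ω ∂P, 0 < C ω := hCε.mono fun ω h => lt_of_lt_of_le hε h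
  have hCint : Integrable C P := hC.integrable le_top
  set c0 : ℝ := ∫ y, C y ∂P with hc0def
  set a : ℝ := ∫ y, A y ∂P with hadef
  have hc0 : ε ≤ c0 := by
    have := integral_mono_ae (integrable_const ε) hCint hCε
    simpa using this
  have c0pos : 0 < c0 := lt_of_lt_of_le hε hc0
  have ha : |a| ≤ NA := by
    have h := norm_integral_le_of_norm_le_const (μ := P) (f := A) (C := NA)
      (by filter_upwards [bdA] with ω hω; simpa using hω)
    simpa [hadef] using h
  have hA2 : MemLp A 2 P := hA.mono_exponent le_top
  have hC2 : MemLp C 2 P := hC.mono_exponent le_top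
  have hfmeas : AEStronglyMeasurable (fun ω => A ω / C ω) P :=
    (hA.1.aemeasurable.div hC.1.aemeasurable).aestronglyMeasurable
  have hftop : MemLp (fun ω => A ω / C ω) ⊤ P := by
    refine memLp_top_of_bound hfmeas (NA / ε) ?_
    filter_upwards [bdA, hCε] with ω h1 h2
    rw [Real.norm_eq_abs, abs_div, abs_of_pos (lt_of_lt_of_le hε h2)]
    exact div_le_div₀ hNA h1 hε h2
  have hf2 : MemLp (fun ω => A ω / C ω) 2 P := hftop.mono_exponent le_top
  set m : ℝ := a / c0 with hmdef
  have hfm2 : MemLp (fun ω => A ω / C ω - m) 2 P := hf2.sub (memLp_const m)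
  set u : Ω → ℝ := fun ω => (A ω - a) / C ω with hudef
  set v : Ω → ℝ := fun ω => (a / c0) * ((c0 - C ω) / C ω) with hvdef
  have hu_m : AEStronglyMeasurable u P :=
    ((hA.1.aemeasurable.sub aemeasurable_const).div hC.1.aemeasurable).aestronglyMeasurable
  have hv_m : AEStronglyMeasurable v P :=
    (((aemeasurable_const.sub hC.1.aemeasurable).div hC.1.aemeasurable).const_mul
      _).aestronglyMeasurable
  have heq : (fun ω => A ω / C ω - m) =ᵐ[P] fun ω => u ω + v ω := by
    filter_upwards [hCpos] with ω hω
    simp only [hudef, hvdef, hmdef]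
    field_simp
    ring
  have hAa : MemLp (fun ω => A ω - a) 2 P := hA2.sub (memLp_const a)
  have hCc : MemLp (fun ω => C ω - c0) 2 P := hC2.sub (memLp_const c0)
  have tri : eLpNorm (fun ω => A ω / C ω - m) 2 P ≤ eLpNorm u 2 P + eLpNorm v 2 P := by
    rw [eLpNorm_congr_ae heq]
    exact eLpNorm_add_le hu_m hv_m one_le_two
  have hu_le : eLpNorm u 2 P ≤ eLpNorm (fun ω => ε⁻¹ * (A ω - a)) 2 P := by
    refine eLpNorm_mono_ae ?_
    filter_upwards [hCε] with ω hω
    have hCw : 0 < C ω := lt_of_lt_of_le hε hω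
    rw [hudef, Real.norm_eq_abs, Real.norm_eq_abs, abs_div, abs_of_pos hCw, abs_mul,
      abs_of_pos (inv_pos.mpr hε), inv_mul_eq_div]
    gcongr
  have hv_le : eLpNorm v 2 P ≤ eLpNorm (fun ω => (NA / ε ^ 2) * (C ω - c0)) 2 P := by
    refine eLpNorm_mono_ae ?_
    filter_upwards [hCε] with ω hω
    have hCw : 0 < C ω := lt_of_lt_of_le hε hω
    have e1 : ‖v ω‖ = (|a| / c0) * (|C ω - c0| / C ω) := by
      rw [hvdef, Real.norm_eq_abs, abs_mul, abs_div, abs_div, abs_of_pos c0pos,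
        abs_of_pos hCw, abs_sub_comm]
    have e2 : ‖(NA / ε ^ 2) * (C ω - c0)‖ = (NA / ε ^ 2) * |C ω - c0| := by
      rw [Real.norm_eq_abs, abs_mul, abs_of_nonneg (by positivity)]
    rw [e1, e2]
    have h3 : |a| / c0 ≤ NA / ε := div_le_div₀ hNA ha hε hc0
    have h4 : |C ω - c0| / C ω ≤ |C ω - c0| / ε := by gcongr
    calc (|a| / c0) * (|C ω - c0| / C ω) ≤ (NA / ε) * (|C ω - c0| / ε) :=
          mul_le_mul h3 h4 (by positivity) (by positivity)
      _ = (NA / ε ^ 2) * |C ω - c0| := by ring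
  have hsu : eLpNorm (fun ω => ε⁻¹ * (A ω - a)) 2 P
      = (‖(ε⁻¹ : ℝ)‖₊ : ℝ≥0∞) * eLpNorm (fun ω => A ω - a) 2 P := by
    rw [show (fun ω => ε⁻¹ * (A ω - a)) = (ε⁻¹ : ℝ) • (fun ω => A ω - a) from rfl,
      eLpNorm_const_smul, enorm_eq_nnnorm]
  have hsv : eLpNorm (fun ω => (NA / ε ^ 2) * (C ω - c0)) 2 P
      = (‖(NA / ε ^ 2 : ℝ)‖₊ : ℝ≥0∞) * eLpNorm (fun ω => C ω - c0) 2 P := by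
    rw [show (fun ω => (NA / ε ^ 2) * (C ω - c0)) = (NA / ε ^ 2 : ℝ) • (fun ω => C ω - c0)
      from rfl, eLpNorm_const_smul, enorm_eq_nnnorm]
  have total : eLpNorm (fun ω => A ω / C ω - m) 2 P
      ≤ (‖(ε⁻¹ : ℝ)‖₊ : ℝ≥0∞) * eLpNorm (fun ω => A ω - a) 2 P
        + (‖(NA / ε ^ 2 : ℝ)‖₊ : ℝ≥0∞) * eLpNorm (fun ω => C ω - c0) 2 P := by
    exact tri.trans (add_le_add (hu_le.trans hsu.le) (hv_le.trans hsv.le))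
  have hAfin : eLpNorm (fun ω => A ω - a) 2 P ≠ ⊤ := hAa.2.ne
  have hCfin : eLpNorm (fun ω => C ω - c0) 2 P ≠ ⊤ := hCc.2.ne
  have htotR : (eLpNorm (fun ω => A ω / C ω - m) 2 P).toReal
      ≤ ε⁻¹ * (eLpNorm (fun ω => A ω - a) 2 P).toReal
        + (NA / ε ^ 2) * (eLpNorm (fun ω => C ω - c0) 2 P).toReal := by
    have hne1 : (‖(ε⁻¹ : ℝ)‖₊ : ℝ≥0∞) * eLpNorm (fun ω => A ω - a) 2 P ≠ ⊤ :=
      ENNReal.mul_ne_top ENNReal.coe_ne_top hAfin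
    have hne2 : (‖(NA / ε ^ 2 : ℝ)‖₊ : ℝ≥0∞) * eLpNorm (fun ω => C ω - c0) 2 P ≠ ⊤ :=
      ENNReal.mul_ne_top ENNReal.coe_ne_top hCfin
    have h := ENNReal.toReal_mono (by exact ENNReal.add_ne_top.mpr ⟨hne1, hne2⟩) total
    rw [ENNReal.toReal_add hne1 hne2, ENNReal.toReal_mul, ENNReal.toReal_mul,
      ENNReal.coe_toReal, ENNReal.coe_toReal, coe_nnnorm, coe_nnnorm,
      Real.norm_eq_abs, Real.norm_eq_abs, abs_of_nonneg (by positivity),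
      abs_of_nonneg (by positivity)] at h
    exact h
  -- now convert everything to sqrt of variances
  have eA : (eLpNorm (fun ω => A ω - a) 2 P).toReal = Real.sqrt (variance A P) := by
    rw [toReal_eLpNorm_two P hAa, variance_eq_integral' P hA2]
  have eC : (eLpNorm (fun ω => C ω - c0) 2 P).toReal = Real.sqrt (variance C P) := by
    rw [toReal_eLpNorm_two P hCc, variance_eq_integral' P hC2]
  have varle : variance (fun ω => A ω / C ω) P ≤ ∫ ω, (A ω / C ω - m) ^ 2 ∂P := by
    have h1 : Integrable (fun ω => A ω / C ω) P := hf2.integrable one_le_two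
    have h2 : Integrable (fun ω => (A ω / C ω) ^ 2) P := by simpa using hf2.integrable_sq
    have hexp : ∫ ω, (A ω / C ω - m) ^ 2 ∂P
        = ∫ ω, (A ω / C ω) ^ 2 ∂P - 2 * m * ∫ ω, A ω / C ω ∂P + m ^ 2 := by
      have hpt : ∀ ω, (A ω / C ω - m) ^ 2
          = (A ω / C ω) ^ 2 - (2 * m) * (A ω / C ω) + m ^ 2 := fun ω => by ring
      simp_rw [hpt]
      have hint : Integrable (fun ω => (A ω / C ω) ^ 2 - (2 * m) * (A ω / C ω)) P :=
        h2.sub (h1.const_mul _)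
      rw [integral_add hint (integrable_const _), integral_sub h2 (h1.const_mul _),
        integral_const_mul, integral_const]
      simp
    rw [variance_eq_sub hf2, hexp]
    have hren : ∫ ω, (A ω / C ω) ^ 2 ∂P = P[(fun ω => A ω / C ω) ^ 2] := by
      refine (integral_congr_ae (Filter.Eventually.of_forall fun ω => ?_)).symm
      simp
    rw [← hren]
    nlinarith [sq_nonneg ((∫ ω, A ω / C ω ∂P) - m)]
  have lhs_eq : (eLpNorm (fun ω => A ω / C ω - m) 2 P).toReal
      = Real.sqrt (∫ ω, (A ω / C ω - m) ^ 2 ∂P) := toReal_eLpNorm_two P hfm2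
  have step : Real.sqrt (variance (fun ω => A ω / C ω) P)
      ≤ (eLpNorm (fun ω => A ω / C ω - m) 2 P).toReal := by
    rw [lhs_eq]
    exact Real.sqrt_le_sqrt varle
  calc Real.sqrt (variance (fun ω => A ω / C ω) P)
      ≤ ε⁻¹ * Real.sqrt (variance A P) + (NA / ε ^ 2) * Real.sqrt (variance C P) := by
        rw [← eA, ← eC]; exact step.trans htotR
    _ = Real.sqrt (variance A P) / ε + NA * Real.sqrt (variance C P) / ε ^ 2 := by ring

lemma abs_integral_mul_le {f g : Ω → ℝ} (hf : MemLp f 2 P) (hg : MemLp g 2 P) :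
    |∫ ω, f ω * g ω ∂P| ≤
      Real.sqrt (∫ ω, (f ω) ^ 2 ∂P) * Real.sqrt (∫ ω, (g ω) ^ 2 ∂P) := by
  set F : Lp ℝ 2 P := hf.toLp f
  set G : Lp ℝ 2 P := hg.toLp g
  have h1 : (inner ℝ F G : ℝ) = ∫ ω, f ω * g ω ∂P := by
    rw [MeasureTheory.L2.inner_def]
    refine integral_congr_ae ?_
    filter_upwards [hf.coeFn_toLp, hg.coeFn_toLp] with ω h1 h2
    simp [F, G, h1, h2, RCLike.inner_apply, mul_comm]
  have h2 : ‖F‖ = Real.sqrt (∫ ω, (f ω) ^ 2 ∂P) := by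
    rw [Lp.norm_toLp, toReal_eLpNorm_two P hf]
  have h3 : ‖G‖ = Real.sqrt (∫ ω, (g ω) ^ 2 ∂P) := by
    rw [Lp.norm_toLp, toReal_eLpNorm_two P hg]
  calc |∫ ω, f ω * g ω ∂P| = |(inner ℝ F G : ℝ)| := by rw [h1]
    _ ≤ ‖F‖ * ‖G‖ := abs_real_inner_le_norm F G
    _ = _ := by rw [h2, h3]


lemma abs_cov_le {f g : Ω → ℝ} (hf : MemLp f 2 P) (hg : MemLp g 2 P) :
    |cov P f g| ≤ Real.sqrt (variance f P) * Real.sqrt (variance g P) := by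
  have hf' : MemLp (fun ω => f ω - ∫ y, f y ∂P) 2 P := hf.sub (memLp_const _)
  have hg' : MemLp (fun ω => g ω - ∫ y, g y ∂P) 2 P := hg.sub (memLp_const _)
  have h := abs_integral_mul_le P hf' hg'
  rw [← variance_eq_integral' P hf, ← variance_eq_integral' P hg] at h
  exact h

lemma memℒp_ratio_two {A C : Ω → ℝ} (hA : MemLp A ⊤ P) (hC : MemLp C ⊤ P)
    {ε : ℝ} (hε : 0 < ε) (hCε : ∀ᵐ ω ∂P, ε ≤ C ω) :
    MemLp (fun ω => A ω / C ω) 2 P := by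
  set NA : ℝ := (eLpNorm A ⊤ P).toReal with hNAdef
  have hNA : 0 ≤ NA := ENNReal.toReal_nonneg
  have bdA : ∀ᵐ ω ∂P, |A ω| ≤ NA := by
    filter_upwards [enorm_ae_le_eLpNormEssSup A P] with ω hω
    have h := ENNReal.toReal_mono (by rw [← eLpNorm_exponent_top]; exact hA.2.ne) hω
    simpa [hNAdef, eLpNorm_exponent_top] using h
  have hfmeas : AEStronglyMeasurable (fun ω => A ω / C ω) P :=
    (hA.1.aemeasurable.div hC.1.aemeasurable).aestronglyMeasurable
  refine (memLp_top_of_bound hfmeas (NA / ε) ?_).mono_exponent le_top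
  filter_upwards [bdA, hCε] with ω h1 h2
  rw [Real.norm_eq_abs, abs_div, abs_of_pos (lt_of_lt_of_le hε h2)]
  exact div_le_div₀ hNA h1 hε h2

end Helpers

/-- covariance bound for self-normalized ratios, making rigorous the
`O(1/N)` covariance estimate for the weighted particle averages. -/
theorem cov_ratio_bound {Ω : Type*} [MeasurableSpace Ω]
    (P : Measure Ω) [IsProbabilityMeasure P]
    (A B C : Ω → ℝ)
    (hA : MemLp A ⊤ P) (hB : MemLp B ⊤ P) (hC : MemLp C ⊤ P)
    (ε : ℝ) (hε : 0 < ε) (hCε : ∀ᵐ ω ∂P, ε ≤ C ω) :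
    |cov P (fun ω => A ω / C ω) (fun ω => B ω / C ω)|
      ≤ (Real.sqrt (variance A P) / ε + essNorm P A * Real.sqrt (variance C P) / ε ^ 2)
        * (Real.sqrt (variance B P) / ε + essNorm P B * Real.sqrt (variance C P) / ε ^ 2)
    ∧
    ∀ (c : ℝ) (N : ℕ), 0 < c → 1 ≤ N →
      variance A P ≤ c / N → variance B P ≤ c / N → variance C P ≤ c / N →
      |cov P (fun ω => A ω / C ω) (fun ω => B ω / C ω)|
        ≤ c * (1 / ε + max (essNorm P A) (essNorm P B) / ε ^ 2) ^ 2 * (1 / N) := by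

  have hf2 : MemLp (fun ω => A ω / C ω) 2 P := memℒp_ratio_two P hA hC hε hCε
  have hg2 : MemLp (fun ω => B ω / C ω) 2 P := memℒp_ratio_two P hB hC hε hCε
  have bigA : Real.sqrt (variance (fun ω => A ω / C ω) P) ≤ Real.sqrt (variance A P) / ε + essNorm P A * Real.sqrt (variance C P) / ε ^ 2 := sqrt_var_ratio_le P hA hC hε hCε
  have bigB : Real.sqrt (variance (fun ω => B ω / C ω) P) ≤ Real.sqrt (variance B P) / ε + essNorm P B * Real.sqrt (variance C P) / ε ^ 2 := sqrt_var_ratio_le P hB hC hε hCε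
  have hNA : (0:ℝ) ≤ essNorm P A := ENNReal.toReal_nonneg
  have hNB : (0:ℝ) ≤ essNorm P B := ENNReal.toReal_nonneg
  have RAnn : 0 ≤ Real.sqrt (variance A P) / ε
      + essNorm P A * Real.sqrt (variance C P) / ε ^ 2 :=
    add_nonneg (div_nonneg (Real.sqrt_nonneg _) hε.le)
      (div_nonneg (mul_nonneg hNA (Real.sqrt_nonneg _)) (by positivity))
  have RBnn : 0 ≤ Real.sqrt (variance B P) / ε
      + essNorm P B * Real.sqrt (variance C P) / ε ^ 2 :=
    add_nonneg (div_nonneg (Real.sqrt_nonneg _) hε.le)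
      (div_nonneg (mul_nonneg hNB (Real.sqrt_nonneg _)) (by positivity))
  have key : |cov P (fun ω => A ω / C ω) (fun ω => B ω / C ω)|
      ≤ (Real.sqrt (variance A P) / ε + essNorm P A * Real.sqrt (variance C P) / ε ^ 2)
        * (Real.sqrt (variance B P) / ε + essNorm P B * Real.sqrt (variance C P) / ε ^ 2) := by
    refine (abs_cov_le P hf2 hg2).trans ?_
    exact mul_le_mul bigA bigB (Real.sqrt_nonneg _) RAnn
  refine ⟨key, ?_⟩
  intro c N hc hN hVA hVB hVC
  have hNpos : (0:ℝ) < N := by exact_mod_cast Nat.lt_of_lt_of_le Nat.zero_lt_one hN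
  have hcN : (0:ℝ) ≤ c / N := div_nonneg hc.le hNpos.le
  set S : ℝ := Real.sqrt (c / N) with hSdef
  have hS0 : 0 ≤ S := Real.sqrt_nonneg _
  set K : ℝ := max (essNorm P A) (essNorm P B) with hKdef
  have hK0 : 0 ≤ K := le_trans hNA (le_max_left _ _)
  set T : ℝ := 1 / ε + K / ε ^ 2 with hTdef
  have hT0 : 0 ≤ T := add_nonneg (by positivity) (div_nonneg hK0 (by positivity))
  have sA : Real.sqrt (variance A P) ≤ S := Real.sqrt_le_sqrt hVA
  have sB : Real.sqrt (variance B P) ≤ S := Real.sqrt_le_sqrt hVB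
  have sC : Real.sqrt (variance C P) ≤ S := Real.sqrt_le_sqrt hVC
  have hRA : Real.sqrt (variance A P) / ε + essNorm P A * Real.sqrt (variance C P) / ε ^ 2
      ≤ S * T := by
    have e2 : essNorm P A * Real.sqrt (variance C P) ≤ K * S :=
      mul_le_mul (le_max_left _ _) sC (Real.sqrt_nonneg _) hK0
    calc Real.sqrt (variance A P) / ε + essNorm P A * Real.sqrt (variance C P) / ε ^ 2
        ≤ S / ε + (K * S) / ε ^ 2 := by gcongr
      _ = S * T := by rw [hTdef]; ring
  have hRB : Real.sqrt (variance B P) / ε + essNorm P B * Real.sqrt (variance C P) / ε ^ 2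
      ≤ S * T := by
    have e2 : essNorm P B * Real.sqrt (variance C P) ≤ K * S :=
      mul_le_mul (le_max_right _ _) sC (Real.sqrt_nonneg _) hK0
    calc Real.sqrt (variance B P) / ε + essNorm P B * Real.sqrt (variance C P) / ε ^ 2
        ≤ S / ε + (K * S) / ε ^ 2 := by gcongr
      _ = S * T := by rw [hTdef]; ring
  have hS2 : S ^ 2 = c / N := Real.sq_sqrt hcN
  calc |cov P (fun ω => A ω / C ω) (fun ω => B ω / C ω)|
      ≤ (Real.sqrt (variance A P) / ε + essNorm P A * Real.sqrt (variance C P) / ε ^ 2)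
        * (Real.sqrt (variance B P) / ε + essNorm P B * Real.sqrt (variance C P) / ε ^ 2) := key
    _ ≤ (S * T) * (S * T) := mul_le_mul hRA hRB RBnn (mul_nonneg hS0 hT0)
    _ = S ^ 2 * T ^ 2 := by ring
    _ = (c / N) * T ^ 2 := by rw [hS2]
    _ = c * T ^ 2 * (1 / N) := by ring
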